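/- Let Λ be a self-injective finite-dimensional k-algebra. Then in the category of T₂(Λ)-modules identified with the morphism category, every object of the form (id : Λ → Λ) and (0 → Λ) is both projective and injective relative to the exact structure on S(Λ) inherited from T₂(Λ)-mod; in particular S(Λ) is a Frobenius category. -/
import Mathlib


/-- Relative projectivity in the submodule category `S(Λ)`: an object
`(w : W₁ → W₀)` of `S(Λ)` is relatively projective if every morphism from it to the
target of a deflation (a componentwise surjective morphism between monomorphisms)
lifts. -/
def SRelProj (Λ : Type) [Ring Λ] (W₁ W₀ : Type) [AddCommGroup W₁] [Module Λ W₁]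
    [AddCommGroup W₀] [Module Λ W₀] (w : W₁ →ₗ[Λ] W₀) : Prop :=
  ∀ (N₁ N₀ L₁ L₀ : ModuleCat.{0} Λ) (g : N₁ →ₗ[Λ] N₀) (h : L₁ →ₗ[Λ] L₀),
    Function.Injective g → Function.Injective h →
    ∀ (b₁ : N₁ →ₗ[Λ] L₁) (b₀ : N₀ →ₗ[Λ] L₀),
      Function.Surjective b₁ → Function.Surjective b₀ → h.comp b₁ = b₀.comp g →
    ∀ (u₁ : W₁ →ₗ[Λ] L₁) (u₀ : W₀ →ₗ[Λ] L₀), h.comp u₁ = u₀.comp w →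
    ∃ (v₁ : W₁ →ₗ[Λ] N₁) (v₀ : W₀ →ₗ[Λ] N₀),
      g.comp v₁ = v₀.comp w ∧ b₁.comp v₁ = u₁ ∧ b₀.comp v₀ = u₀

/-- Relative injectivity in the submodule category `S(Λ)`: an object
`(w : W₁ → W₀)` of `S(Λ)` is relatively injective if every morphism to it from the
source of an inflation (a componentwise injective morphism between monomorphisms whose
induced map on cokernels is injective, i.e. whose cokernel is again in `S(Λ)`)
extends. -/
def SRelInj (Λ : Type) [Ring Λ] (W₁ W₀ : Type) [AddCommGroup W₁] [Module Λ W₁]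
    [AddCommGroup W₀] [Module Λ W₀] (w : W₁ →ₗ[Λ] W₀) : Prop :=
  ∀ (M₁ M₀ N₁ N₀ : ModuleCat.{0} Λ) (f : M₁ →ₗ[Λ] M₀) (g : N₁ →ₗ[Λ] N₀),
    Function.Injective f → Function.Injective g →
    ∀ (a₁ : M₁ →ₗ[Λ] N₁) (a₀ : M₀ →ₗ[Λ] N₀),
      Function.Injective a₁ → Function.Injective a₀ → g.comp a₁ = a₀.comp f →
      -- the induced map on cokernels is injective:
      (∀ n₁ : N₁, g n₁ ∈ LinearMap.range a₀ → n₁ ∈ LinearMap.range a₁) →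
    ∀ (u₁ : M₁ →ₗ[Λ] W₁) (u₀ : M₀ →ₗ[Λ] W₀), w.comp u₁ = u₀.comp f →
    ∃ (v₁ : N₁ →ₗ[Λ] W₁) (v₀ : N₀ →ₗ[Λ] W₀),
      w.comp v₁ = v₀.comp g ∧ v₁.comp a₁ = u₁ ∧ v₀.comp a₀ = u₀

/-- For a finite-dimensional self-injective algebra `Λ`, the objects
`(id : Λ → Λ)` and `(0 → Λ)` of the submodule category `S(Λ)` are both relatively
projective and relatively injective for the exact structure on `S(Λ)` inherited from
`T₂(Λ)`-mod (this gives that `S(Λ)` is a Frobenius category). -/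
theorem stmt_16 (k : Type) [Field k] (Λ : Type) [Ring Λ] [Algebra k Λ]
    [FiniteDimensional k Λ] [Module.Injective Λ Λ] :
    (SRelProj Λ Λ Λ LinearMap.id ∧ SRelInj Λ Λ Λ LinearMap.id) ∧
      (SRelProj Λ PUnit Λ 0 ∧ SRelInj Λ PUnit Λ 0) := by
  refine ⟨⟨?_, ?_⟩, ?_, ?_⟩
  · -- SRelProj (id : Λ → Λ)
    intro N₁ N₀ L₁ L₀ g h hg hh b₁ b₀ hb₁ hb₀ hcomm u₁ u₀ hu
    obtain ⟨n₁, hn₁⟩ := hb₁ (u₁ 1)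
    refine ⟨LinearMap.toSpanSingleton Λ N₁ n₁,
      g.comp (LinearMap.toSpanSingleton Λ N₁ n₁), ?_, ?_, ?_⟩
    · ext x; simp
    · apply LinearMap.ext_ring
      simpa using hn₁
    · apply LinearMap.ext_ring
      have h1 : b₀ (g n₁) = h (b₁ n₁) := by
        have := congrArg (fun φ : N₁ →ₗ[Λ] L₀ => φ n₁) hcomm
        simpa using this.symm
      have h2 : h (u₁ 1) = u₀ 1 := by
        have := congrArg (fun φ : Λ →ₗ[Λ] L₀ => φ 1) hu
        simpa using this
      simp [h1, hn₁, h2]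
  · -- SRelInj (id : Λ → Λ)
    intro M₁ M₀ N₁ N₀ f g hf hg a₁ a₀ ha₁ ha₀ hcomm hcoker u₁ u₀ hu
    obtain ⟨v₀, hv₀⟩ := Module.Injective.out a₀ ha₀ u₀
    refine ⟨v₀.comp g, v₀, ?_, ?_, ?_⟩
    · ext x; simp
    · ext m₁
      have h1 : g (a₁ m₁) = a₀ (f m₁) := congrArg (fun φ : M₁ →ₗ[Λ] N₀ => φ m₁) hcomm
      have h2 : u₁ m₁ = u₀ (f m₁) := by
        have := congrArg (fun φ : M₁ →ₗ[Λ] Λ => φ m₁) hu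
        simpa using this
      simp [h1, hv₀, h2]
    · ext m₀; simp [hv₀]
  · -- SRelProj (0 : PUnit → Λ)
    intro N₁ N₀ L₁ L₀ g h hg hh b₁ b₀ hb₁ hb₀ hcomm u₁ u₀ hu
    obtain ⟨n₀, hn₀⟩ := hb₀ (u₀ 1)
    refine ⟨0, LinearMap.toSpanSingleton Λ N₀ n₀, ?_, ?_, ?_⟩
    · ext x; simp
    · ext x
      rw [Subsingleton.elim x (0 : PUnit)]
      simp
      exact (map_zero u₁).symm
    · apply LinearMap.ext_ring
      simpa using hn₀
  · -- SRelInj (0 : PUnit → Λ)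
    intro M₁ M₀ N₁ N₀ f g hf hg a₁ a₀ ha₁ ha₀ hcomm hcoker u₁ u₀ hu
    -- build φ : M₀ × N₁ →ₗ N₀ and factor u₀ through the quotient
    set φ : (M₀ × N₁) →ₗ[Λ] N₀ := a₀.coprod g with hφ
    set u : (M₀ × N₁) →ₗ[Λ] Λ := u₀.comp (LinearMap.fst Λ M₀ N₁) with hudef
    have hker : LinearMap.ker φ ≤ LinearMap.ker u := by
      rintro ⟨m, n⟩ hmn
      have hmn' : a₀ m + g n = 0 := hmn
      have hrange : g n ∈ LinearMap.range a₀ := ⟨-m, by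
        rw [map_neg]; exact neg_eq_of_add_eq_zero_right hmn'⟩
      obtain ⟨m₁, hm₁⟩ := hcoker n hrange
      have hga : g (a₁ m₁) = a₀ (f m₁) := congrArg (fun ψ : M₁ →ₗ[Λ] N₀ => ψ m₁) hcomm
      have hm : m = -(f m₁) := by
        apply ha₀
        rw [map_neg, ← hga, hm₁]
        have : a₀ m = -(g n) := by rw [eq_neg_iff_add_eq_zero]; exact hmn'
        rw [this]
      have hu0f : u₀ (f m₁) = 0 := by
        have := congrArg (fun ψ : M₁ →ₗ[Λ] Λ => ψ m₁) hu
        simpa using this.symm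
      show u₀ m = 0
      rw [hm, map_neg, hu0f, neg_zero]
    set φbar := (LinearMap.ker φ).liftQ φ le_rfl with hφbar
    have hφbarinj : Function.Injective φbar := by
      rw [← LinearMap.ker_eq_bot, hφbar]
      exact Submodule.ker_liftQ_eq_bot _ _ _ le_rfl
    set ubar := (LinearMap.ker φ).liftQ u hker with hubar
    obtain ⟨v₀, hv₀⟩ := Module.Injective.out φbar hφbarinj ubar
    have key : ∀ m n, v₀ (a₀ m + g n) = u₀ m := by
      intro m n
      exact hv₀ (Submodule.Quotient.mk (m, n))
    refine ⟨0, v₀, ?_, ?_, ?_⟩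
    · ext n
      have := key 0 n
      simp only [map_zero, zero_add] at this
      simp [this]
    · exact Subsingleton.elim _ _
    · ext m
      have := key m 0
      simpa using this
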